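/- Let π be a set of primes, G a finite π-separable group, c ∈ H²G with c = c_π c_{π'}, and V an irreducible c-module with a decomposition V = Ind_J^{cG}(V_π ⊗ V_{π'}) where V_π is an irreducible c_π|_J-module whose restriction to a Hall π-subgroup of J is irreducible and V_{π'} is an irreducible c_{π'}|_J-module whose restriction to a Hall π'-subgroup of J is irreducible. Then (dim V)_π = |G:J|_π · dim V_π and (dim V)_{π'} = |G:J|_{π'} · dim V_{π'}. -/

import Mathlib

/-!
The induced module has dimension `|G:J| · dim V_π · dim V_π'`, so it suffices that `dim V_π` is a
`π`-number and `dim V_π'` a `π'`-number. Both are instances of one fact: an irreducible projective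
representation `φ` of a finite `π`-group `K` whose coclass has `π`-order `m` has `π`-degree.
Rescaling `φ` by a cochain `ε` moves the cocycle values into the `m`-th roots of unity; the pairs
`((u * ε x) • φ x, x)` with `uᵐ = 1` then form a finite group of exponent dividing `m * |K|`
acting irreducibly on the same space, and the degree of an irreducible complex representation
divides the group order (Frobenius: `∑ χ(g⁻¹) g` acts by the scalar `|K| / dim`, which is
an algebraic integer).
-/

open scoped TensorProduct Classical

namespace ProjIM

variable {G : Type*} [Group G]

/-- The multiplicative 2-cocycle condition for `α : G → G → ℂˣ`. -/
def IsMulCocycle (α : G → G → ℂˣ) : Prop :=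
  ∀ x y z, α x y * α (x * y) z = α y z * α x (y * z)

/-- The group of `ℂˣ`-valued 2-cocycles of `G` (trivial action). -/
def CocycleGroup (G : Type*) [Group G] : Subgroup (G → G → ℂˣ) where
  carrier := {α | IsMulCocycle α}
  one_mem' := by intro x y z; simp
  mul_mem' := by
    intro a b ha hb x y z
    simp only [Pi.mul_apply]
    rw [mul_mul_mul_comm, ha x y z, hb x y z, mul_mul_mul_comm]
  inv_mem' := by
    intro a ha x y z
    simp only [Pi.inv_apply]
    rw [← mul_inv, ← mul_inv, ha x y z]

/-- The subgroup of 2-coboundaries inside the group of 2-cocycles. -/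
def coboundaries (G : Type*) [Group G] : Subgroup (CocycleGroup G) where
  carrier := {a | ∃ ζ : G → ℂˣ, ∀ x y, (a : G → G → ℂˣ) x y = ζ x * ζ y * (ζ (x * y))⁻¹}
  one_mem' := ⟨1, by intro x y; simp⟩
  mul_mem' := by
    rintro a b ⟨ζ, hζ⟩ ⟨η, hη⟩
    refine ⟨ζ * η, fun x y => ?_⟩
    have : ((a * b : CocycleGroup G) : G → G → ℂˣ) x y
        = (a : G → G → ℂˣ) x y * (b : G → G → ℂˣ) x y := rfl
    rw [this, hζ, hη]
    simp only [Pi.mul_apply, mul_inv]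
    ac_rfl
  inv_mem' := by
    rintro a ⟨ζ, hζ⟩
    refine ⟨ζ⁻¹, fun x y => ?_⟩
    have : ((a⁻¹ : CocycleGroup G) : G → G → ℂˣ) x y = ((a : G → G → ℂˣ) x y)⁻¹ := rfl
    rw [this, hζ]
    simp only [Pi.inv_apply, mul_inv, inv_inv]
    try ac_rfl

/-- The Schur multiplier `H²(G, ℂˣ)` (trivial action): cocycles modulo coboundaries. -/
abbrev SchurMultiplier (G : Type*) [Group G] := CocycleGroup G ⧸ coboundaries G

/-- The coclass of a cocycle. -/
def mkClass (a : CocycleGroup G) : SchurMultiplier G := QuotientGroup.mk a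

/-- Pullback of cocycles along a group homomorphism. -/
def cocyclePull {H : Type*} [Group H] (f : H →* G) : CocycleGroup G →* CocycleGroup H where
  toFun a := ⟨fun x y => (a : G → G → ℂˣ) (f x) (f y), by
    intro x y z
    have h := a.2 (f x) (f y) (f z)
    simpa [map_mul] using h⟩
  map_one' := rfl
  map_mul' a b := rfl

/-- Pullback (restriction/inflation) on Schur multipliers along a group homomorphism. -/
def H2Pull {H : Type*} [Group H] (f : H →* G) : SchurMultiplier G →* SchurMultiplier H :=
  QuotientGroup.map _ _ (cocyclePull f) (by
    rintro a ⟨ζ, hζ⟩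
    exact ⟨ζ ∘ f, fun x y => by
      simpa [cocyclePull, map_mul] using hζ (f x) (f y)⟩)

/-- Restriction of a coclass to a subgroup. -/
abbrev H2Res (H : Subgroup G) : SchurMultiplier G →* SchurMultiplier H := H2Pull H.subtype

variable {M M' MV U : Type*} [AddCommGroup M] [Module ℂ M] [AddCommGroup M'] [Module ℂ M']
  [AddCommGroup MV] [Module ℂ MV] [AddCommGroup U] [Module ℂ U]

/-- A projective representation of `G` on the complex vector space `M`,
with an explicit 2-cocycle `α`. -/
structure ProjRep (G : Type*) [Group G] (M : Type*) [AddCommGroup M] [Module ℂ M] where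
  α : CocycleGroup G
  φ : G → M ≃ₗ[ℂ] M
  rel : ∀ x y (v : M), φ x (φ y v) = ((α : G → G → ℂˣ) x y : ℂ) • φ (x * y) v

/-- The coclass in the Schur multiplier determined by a projective representation. -/
def ProjRep.coclass (ρ : ProjRep G M) : SchurMultiplier G := QuotientGroup.mk ρ.α

/-- Irreducibility of a projective representation: the only invariant subspaces are trivial. -/
def ProjRep.Irreducible (ρ : ProjRep G M) : Prop :=
  Nontrivial M ∧ ∀ W : Submodule ℂ M, (∀ g : G, ∀ v ∈ W, ρ.φ g v ∈ W) → W = ⊥ ∨ W = ⊤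

/-- Pullback of a projective representation along a group homomorphism
(e.g. restriction to a subgroup, or inflation from a quotient). -/
def ProjRep.pull {H : Type*} [Group H] (f : H →* G) (ρ : ProjRep G M) : ProjRep H M where
  α := cocyclePull f ρ.α
  φ h := ρ.φ (f h)
  rel x y v := by rw [map_mul]; exact ρ.rel (f x) (f y) v

/-- Restriction of a projective representation to a subgroup. -/
def ProjRep.res (ρ : ProjRep G M) (H : Subgroup G) : ProjRep H M := ρ.pull H.subtype

/-- Tensor product of two projective representations; the cocycles multiply. -/
noncomputable def ProjRep.tprod (ρ : ProjRep G M) (σ : ProjRep G M') :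
    ProjRep G (M ⊗[ℂ] M') where
  α := ρ.α * σ.α
  φ g := TensorProduct.congr (ρ.φ g) (σ.φ g)
  rel x y v := by
    have h : (TensorProduct.congr (ρ.φ x) (σ.φ x)).toLinearMap ∘ₗ
          (TensorProduct.congr (ρ.φ y) (σ.φ y)).toLinearMap
        = (((ρ.α : G → G → ℂˣ) x y : ℂ) * ((σ.α : G → G → ℂˣ) x y : ℂ)) •
          (TensorProduct.congr (ρ.φ (x * y)) (σ.φ (x * y))).toLinearMap := by
      apply TensorProduct.ext'
      intro m n
      simp [TensorProduct.congr_tmul, ρ.rel, σ.rel, TensorProduct.smul_tmul',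
        TensorProduct.tmul_smul, smul_smul, mul_comm]
    have h2 := LinearMap.congr_fun h v
    exact h2

open scoped TensorProduct in
/-- Tensor product of a finite family of projective representations. -/
noncomputable def ProjRep.tprodPi {ι : Type*} [Fintype ι] {N : ι → Type*}
    [∀ i, AddCommGroup (N i)] [∀ i, Module ℂ (N i)]
    (ρ : ∀ i, ProjRep G (N i)) : ProjRep G (⨂[ℂ] i, N i) where
  α := ∏ i, (ρ i).α
  φ g := PiTensorProduct.congr fun i => (ρ i).φ g
  rel x y v := by
    have h : (PiTensorProduct.congr fun i => (ρ i).φ x).toLinearMap ∘ₗ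
          (PiTensorProduct.congr fun i => (ρ i).φ y).toLinearMap
        = (∏ i, (((ρ i).α : G → G → ℂˣ) x y : ℂ)) •
          (PiTensorProduct.congr fun i => (ρ i).φ (x * y)).toLinearMap := by
      apply PiTensorProduct.ext
      apply MultilinearMap.ext
      intro m
      simp only [LinearMap.compMultilinearMap_apply, LinearMap.coe_comp,
        LinearEquiv.coe_coe, Function.comp_apply, PiTensorProduct.congr_tprod,
        LinearMap.smul_apply]
      rw [funext fun i => (ρ i).rel x y (m i)]
      rw [MultilinearMap.map_smul_univ]
    have h2 := LinearMap.congr_fun h v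
    have hc1 : ((∏ i, (ρ i).α : CocycleGroup G) : G → G → ℂˣ)
        = ∏ i, ((ρ i).α : G → G → ℂˣ) :=
      SubmonoidClass.coe_finset_prod _ _
    have hcoe : (((∏ i, (ρ i).α : CocycleGroup G) : G → G → ℂˣ) x y : ℂ)
        = ∏ i, (((ρ i).α : G → G → ℂˣ) x y : ℂ) := by
      rw [hc1]
      simp only [Finset.prod_apply]
      exact map_prod (Units.coeHom ℂ) _ _
    simpa [hcoe, smul_smul] using h2

/-- Similarity (projective equivalence) of projective representations: the cocycles differ by
a coboundary `δζ` and the actions are intertwined by a linear equivalence, twisted by `ζ`. -/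
def ProjRep.IsSimilar (ρ : ProjRep G M) (σ : ProjRep G M') : Prop :=
  ∃ (ζ : G → ℂˣ) (e : M ≃ₗ[ℂ] M'),
    (∀ x y : G, (σ.α : G → G → ℂˣ) x y
        = (ρ.α : G → G → ℂˣ) x y * ζ x * ζ y * (ζ (x * y))⁻¹) ∧
    ∀ (g : G) (v : M), σ.φ g (e v) = (ζ g : ℂ) • e (ρ.φ g v)

/-- `V` occurs as an (irreducible) constituent of `ρ`: there is an injective equivariant map
`V → ρ`, up to a coboundary twist of the cocycles. -/
def ProjRep.HasConstituent {K : Type*} [Group K] (ρ : ProjRep K M') (V : ProjRep K MV) : Prop :=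
  ∃ (ζ : K → ℂˣ) (e : MV →ₗ[ℂ] M'), Function.Injective e ∧
    (∀ x y : K, (ρ.α : K → K → ℂˣ) x y
        = (V.α : K → K → ℂˣ) x y * ζ x * ζ y * (ζ (x * y))⁻¹) ∧
    ∀ (x : K) (v : MV), ρ.φ x (e v) = (ζ x : ℂ) • e (V.φ x v)

/-- `ρ` is induced from the projective representation `σ` of the subgroup `J`:
up to a coboundary twist, `σ` embeds `J`-equivariantly into `ρ` and `M` is the (direct) sum of
the translates of its image along a transversal of `J` in `G`. -/
def ProjRep.IsInducedFrom (ρ : ProjRep G M) (J : Subgroup G) (σ : ProjRep J U) : Prop :=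
  ∃ ζ : J → ℂˣ,
    (∀ x y : J, (σ.α : ↥J → ↥J → ℂˣ) x y
        = (ρ.α : G → G → ℂˣ) x y * ζ x * ζ y * (ζ (x * y))⁻¹) ∧
    ∃ e : U →ₗ[ℂ] M, Function.Injective e ∧
      (∀ (j : J) (u : U), ρ.φ j (e u) = ((ζ j : ℂ))⁻¹ • e (σ.φ j u)) ∧
      ∃ T : Finset G, (∀ g : G, ∃! t, t ∈ T ∧ t⁻¹ * g ∈ J) ∧
        (⨆ t ∈ T, (LinearMap.range e).map (ρ.φ t).toLinearMap) = ⊤ ∧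
        Module.finrank ℂ M = T.card * Module.finrank ℂ U

/-- A projective representation of `K` factors through the quotient `K/N` (i.e. it is inflated
from `K/N`) if both the cocycle and the action are constant on cosets of `N`. -/
def ProjRep.FactorsThrough {K : Type*} [Group K] (ρ : ProjRep K M) (N : Subgroup K) : Prop :=
  (∀ x x' y y' : K, x⁻¹ * x' ∈ N → y⁻¹ * y' ∈ N →
      (ρ.α : K → K → ℂˣ) x y = (ρ.α : K → K → ℂˣ) x' y') ∧
  (∀ x x' : K, x⁻¹ * x' ∈ N → ρ.φ x = ρ.φ x')

/-- A coclass of `K` is inflated from `K/N` if it is represented by a cocycle constant on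
cosets of `N`. -/
def InflatedClass {K : Type*} [Group K] (N : Subgroup K) (b : SchurMultiplier K) : Prop :=
  ∃ a : CocycleGroup K, mkClass a = b ∧
    ∀ x x' y y' : K, x⁻¹ * x' ∈ N → y⁻¹ * y' ∈ N →
      (a : K → K → ℂˣ) x y = (a : K → K → ℂˣ) x' y'

/-- The inertia set `I_G^c(V)` of a projective representation `φ` of a (normal) subgroup `N`,
with respect to a global cocycle `a` of `G` restricting to the cocycle of `φ`. -/
def inertiaSet (a : CocycleGroup G) (N : Subgroup G) (φ : N → M ≃ₗ[ℂ] M) : Set G :=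
  {g | ∃ y : M ≃ₗ[ℂ] M, ∀ (x : G) (hx : x ∈ N) (hxg : g⁻¹ * x * g ∈ N) (v : M),
      y.symm ((φ ⟨x, hx⟩) (y v)) =
        (((a : G → G → ℂˣ) x g : ℂ) * (((a : G → G → ℂˣ) g (g⁻¹ * x * g) : ℂ))⁻¹) •
          φ ⟨g⁻¹ * x * g, hxg⟩ v}

/-- The `c`-class sum of `x` in the twisted group algebra `ℂ^c K`
(coordinates with respect to the standard basis). -/
noncomputable def classSum {K : Type*} [Group K] (a : CocycleGroup K) (x : K) : K → ℂ :=
  fun z => ((Nat.card (Subgroup.centralizer {x} : Subgroup K) : ℂ))⁻¹ *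
    ∑ᶠ g : K, if z = g⁻¹ * x * g then
      ((a : K → K → ℂˣ) x g : ℂ) * (((a : K → K → ℂˣ) g (g⁻¹ * x * g) : ℂ))⁻¹ else 0

/-- An element is `c`-regular if its class sum in the twisted group algebra is nonzero. -/
def IsCRegular {K : Type*} [Group K] (a : CocycleGroup K) (x : K) : Prop :=
  classSum a x ≠ 0

/-- Multiplication in the twisted group algebra `ℂ^a K`, in coordinates. -/
noncomputable def twistedMul {K : Type*} [Group K] (a : CocycleGroup K) (f g : K → ℂ) : K → ℂ :=
  fun z => ∑ᶠ x : K, ((a : K → K → ℂˣ) x (x⁻¹ * z) : ℂ) * f x * g (x⁻¹ * z)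

/-- The center of the twisted group algebra `ℂ^a K`, in coordinates. -/
def twistedCenter {K : Type*} [Group K] (a : CocycleGroup K) : Set (K → ℂ) :=
  {f | ∀ g : K → ℂ, twistedMul a f g = twistedMul a g f}

/-- Conjugation by `g ∈ G` on the twisted group algebra `ℂ^a N` of a normal subgroup `N`,
in coordinates: `(xσ)^(gσ) = a x g * (a g (g⁻¹xg))⁻¹ • (g⁻¹xg)σ`. -/
noncomputable def conjTwisted (a : CocycleGroup G) (N : Subgroup G) (hN : N.Normal) (g : G)
    (f : N → ℂ) : N → ℂ :=
  fun z => ((a : G → G → ℂˣ) (g * z * g⁻¹) g : ℂ) * (((a : G → G → ℂˣ) g (z : G) : ℂ))⁻¹ *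
    f ⟨g * z * g⁻¹, hN.conj_mem z.1 z.2 g⟩

/-- `n` is a `π`-number: all its prime divisors lie in `π`. -/
def IsPiNumber (π : Set ℕ) (n : ℕ) : Prop := ∀ p : ℕ, p.Prime → p ∣ n → p ∈ π

/-- `H` is a Hall `π`-subgroup of `G`: its order is a `π`-number and its index a `π'`-number. -/
def IsHall (π : Set ℕ) (H : Subgroup G) : Prop :=
  IsPiNumber π (Nat.card H) ∧ IsPiNumber πᶜ H.index

/-- `G` is `π`-separable: it has a normal series each of whose factors is
a `π`-group or a `π'`-group. -/
def IsPiSeparable (π : Set ℕ) (G : Type*) [Group G] : Prop :=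
  ∃ (l : ℕ) (s : Fin (l + 1) → Subgroup G), s 0 = ⊥ ∧ s (Fin.last l) = ⊤ ∧ Monotone s ∧
    (∀ i, (s i).Normal) ∧
    ∀ i : Fin l, IsPiNumber π ((s i.castSucc).relIndex (s i.succ)) ∨
      IsPiNumber πᶜ ((s i.castSucc).relIndex (s i.succ))

/-- `N = O_π(G)` is the largest normal subgroup of `G` whose order is a `π`-number. -/
def IsPiCore (π : Set ℕ) (N : Subgroup G) : Prop :=
  N.Normal ∧ IsPiNumber π (Nat.card N) ∧
    ∀ K : Subgroup G, K.Normal → IsPiNumber π (Nat.card K) → K ≤ N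

/-- `N₂/N₁ = O_π(G/N₁)`: `N₂` is the largest normal subgroup of `G` containing `N₁` such that
`N₂/N₁` is a `π`-group. -/
def IsPiCoreAbove (π : Set ℕ) (N₁ N₂ : Subgroup G) : Prop :=
  N₂.Normal ∧ N₁ ≤ N₂ ∧ IsPiNumber π (N₁.relIndex N₂) ∧
    ∀ K : Subgroup G, K.Normal → N₁ ≤ K → IsPiNumber π (N₁.relIndex K) → K ≤ N₂

/-- The `π`-part of a natural number. -/
noncomputable def piPart (π : Set ℕ) (n : ℕ) : ℕ :=
  n.factorization.prod fun p k => if p ∈ π then p ^ k else 1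

/-- The set of primes dividing the degree of some irreducible `c`-module of `G`. -/
def PiIrr (G : Type*) [Group G] (c : SchurMultiplier G) : Set ℕ :=
  {p | p.Prime ∧ ∃ (n : ℕ) (ρ : ProjRep G (Fin n → ℂ)), ρ.Irreducible ∧ ρ.coclass = c ∧ p ∣ n}

end ProjIM

open Module

theorem Module.End.isIntegral_trace_of_pow_eq_one {K V : Type*} [Field K] [IsAlgClosed K]
    [AddCommGroup V] [Module K V] [FiniteDimensional K V] {f : Module.End K V} {n : ℕ}
    (hn : n ≠ 0) (hf : f ^ n = 1) : IsIntegral ℤ (LinearMap.trace K V f) := by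
  rw [Module.End.trace_eq_sum_roots_charpoly_of_splits (IsAlgClosed.splits _)]
  refine IsIntegral.multiset_sum fun μ hμ => ?_
  obtain ⟨v, hv⟩ := ((Module.End.hasEigenvalue_iff_isRoot_charpoly f μ).2
    (Polynomial.isRoot_of_mem_roots hμ)).exists_hasEigenvector
  have hμn : μ ^ n = 1 := by
    apply smul_left_injective K hv.2
    simpa [hf] using (hv.pow_apply n).symm
  exact IsIntegral.of_pow (Nat.pos_of_ne_zero hn) (hμn ▸ isIntegral_one)

namespace Representation

variable {G V : Type*} [Group G] [AddCommGroup V] [Module ℂ V] (ρ : Representation ℂ G V)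

theorem IsIrreducible.nontrivial [IsIrreducible ρ] : Nontrivial V := by
  by_contra h
  rw [not_nontrivial_iff_subsingleton] at h
  exact bot_ne_top (α := Subrepresentation ρ) (Subrepresentation.toSubmodule_injective
    (Subsingleton.elim _ _))

variable [FiniteDimensional ℂ V]

theorem IsIrreducible.exists_eq_smul_one [IsIrreducible ρ] (f : Module.End ℂ V)
    (hf : ∀ g, f ∘ₗ ρ g = ρ g ∘ₗ f) : ∃ c : ℂ, f = c • 1 := by
  obtain ⟨c, hc⟩ := IsIrreducible.algebraMap_intertwiningMap_bijective_of_isAlgClosed.2 ⟨f, hf⟩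
  exact ⟨c, by ext v; simpa using congr($hc.symm v)⟩

theorem isIntegral_character [Finite G] (g : G) : IsIntegral ℤ (ρ.character g) := by
  have := Fintype.ofFinite G
  refine Module.End.isIntegral_trace_of_pow_eq_one (Fintype.card_ne_zero (α := G)) ?_
  rw [← map_pow, pow_card_eq_one, map_one]

variable [Fintype G]

theorem sum_character_inv_smul_eq [IsIrreducible ρ] :
    ∑ g, ρ.character g⁻¹ • ρ g = ((Nat.card G : ℂ) / finrank ℂ V) • 1 := by
  have := IsIrreducible.nontrivial ρ
  obtain ⟨c, hc⟩ := IsIrreducible.exists_eq_smul_one ρ (∑ g, ρ.character g⁻¹ • ρ g) fun h => by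
    simp only [← Module.End.mul_eq_comp, Finset.sum_mul, Finset.mul_sum, smul_mul_assoc,
      mul_smul_comm, ← map_mul]
    refine Fintype.sum_equiv (MulAut.conj h⁻¹).toEquiv _ _ fun g => ?_
    simp only [MulEquiv.toEquiv_eq_coe, EquivLike.coe_coe, MulAut.conj_apply, inv_inv, mul_inv_rev,
      ← mul_assoc, mul_inv_cancel, one_mul]
    rw [char_mul_comm, mul_inv_cancel_left]
  have : Invertible (Nat.card G : ℂ) := invertibleOfNonzero (by simp)
  have horth := char_orthonormal ρ ρ
  rw [if_pos ⟨Equiv.refl ρ⟩, inv_mul_eq_one₀ (by simp)] at horth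
  have htrace := congr(LinearMap.trace ℂ V $hc)
  simp only [map_sum, map_smul, LinearMap.trace_one, smul_eq_mul] at htrace
  rw [hc, eq_div_iff (Nat.cast_ne_zero.2 finrank_pos.ne') |>.2 (htrace.symm.trans ?_)]
  simpa [character, mul_comm] using horth.symm

theorem isIntegral_card_div_finrank [IsIrreducible ρ] :
    IsIntegral ℤ ((Nat.card G : ℂ) / finrank ℂ V) := by
  -- `|G| / dim V` stabilises the finitely generated `O`-module spanned by `ρ(G)`
  let O := integralClosure ℤ ℂ
  let N := Submodule.span O (Set.range (ρ : G → Module.End ℂ V))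
  refine isIntegral_trans (A := O) _ <| isIntegral_of_smul_mem_submodule N ?_
    (Submodule.fg_span (Set.finite_range _)) _ fun n hn => ?_
  · have := IsIrreducible.nontrivial ρ
    exact (Submodule.ne_bot_iff _).2 ⟨ρ 1, Submodule.subset_span ⟨1, rfl⟩, by simp⟩
  induction hn using Submodule.span_induction with
  | mem _ hx =>
    obtain ⟨h, rfl⟩ := hx
    rw [← one_mul (ρ h : Module.End ℂ V), ← smul_mul_assoc, ← sum_character_inv_smul_eq ρ,
      Finset.sum_mul]
    refine Submodule.sum_mem _ fun g _ => ?_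
    rw [smul_mul_assoc, ← map_mul]
    exact N.smul_mem (⟨_, isIntegral_character ρ g⁻¹⟩ : O) (Submodule.subset_span ⟨g * h, rfl⟩)
  | zero => simp
  | add x y _ _ hx hy => simpa only [smul_add] using N.add_mem hx hy
  | smul o x _ hx => simpa only [smul_comm _ o x] using N.smul_mem o hx

theorem finrank_dvd_card [IsIrreducible ρ] : finrank ℂ V ∣ Nat.card G := by
  have := IsIrreducible.nontrivial ρ
  have hint := isIntegral_card_div_finrank ρ
  rw [← Rat.cast_natCast, ← Rat.cast_natCast (finrank ℂ V), ← Rat.cast_div,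
    ← eq_ratCast (algebraMap ℚ ℂ), isIntegral_algebraMap_iff (algebraMap ℚ ℂ).injective] at hint
  obtain ⟨n, hn⟩ := IsIntegrallyClosed.isIntegral_iff.1 hint
  rw [algebraMap_int_eq, eq_intCast, eq_div_iff (by simp [finrank_pos.ne'])] at hn
  exact Int.natCast_dvd_natCast.1 ⟨n, by rw [mul_comm]; exact_mod_cast hn.symm⟩

end Representation

namespace ProjIM

variable {K W : Type*} [Group K] [AddCommGroup W] [Module ℂ W]

section PiNumbers

variable {π : Set ℕ} {m n : ℕ}

theorem IsPiNumber.of_dvd (h : IsPiNumber π n) (hmn : m ∣ n) : IsPiNumber π m :=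
  fun p hp hpm => h p hp (hpm.trans hmn)

theorem IsPiNumber.mul (hm : IsPiNumber π m) (hn : IsPiNumber π n) : IsPiNumber π (m * n) :=
  fun p hp hpd => (hp.dvd_mul.1 hpd).elim (hm p hp) (hn p hp)

theorem isPiNumber_card_of_forall_pow_eq_one [Finite K] (hn : IsPiNumber π n)
    (h : ∀ g : K, g ^ n = 1) : IsPiNumber π (Nat.card K) := fun p hp hpK => by
  have := Fact.mk hp
  obtain ⟨g, hg⟩ := exists_prime_orderOf_dvd_card' p hpK
  exact hn p hp (hg ▸ orderOf_dvd_of_pow_eq_one (h g))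

end PiNumbers

theorem mkClass_pow_natCard [Finite K] (α : CocycleGroup K) : mkClass α ^ Nat.card K = 1 := by
  have := Fintype.ofFinite K
  let a : K → K → ℂˣ := α
  rw [mkClass, ← QuotientGroup.mk_pow, QuotientGroup.eq_one_iff]
  -- the coboundary `δζ` with `ζ x = ∏ z, a x z`, by taking the product of the cocycle identity
  refine ⟨fun x => ∏ z, a x z, fun x y => ?_⟩
  have h := Finset.prod_congr rfl fun z (_ : z ∈ Finset.univ) => α.2 x y z
  rw [Finset.prod_mul_distrib, Finset.prod_mul_distrib, Finset.prod_const, Finset.card_univ,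
    ← Nat.card_eq_fintype_card, Fintype.prod_equiv (Equiv.mulLeft y) (fun z => a x (y * z)) (a x)
    fun _ => rfl] at h
  change a x y ^ Nat.card K = _
  rw [eq_mul_inv_iff_mul_eq, h, mul_comm]

theorem exists_mul_mem_rootsOfUnity (α : CocycleGroup K) {m : ℕ} (hm : m ≠ 0)
    (h : mkClass α ^ m = 1) : ∃ ε : K → ℂˣ,
      ∀ x y, (α : K → K → ℂˣ) x y * ε x * ε y * (ε (x * y))⁻¹ ∈ rootsOfUnity m ℂ := by
  obtain ⟨ζ, hζ⟩ : α ^ m ∈ coboundaries K := (QuotientGroup.eq_one_iff _).1 h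
  have hroot (x : K) : ∃ u : ℂˣ, u ^ m = (ζ x)⁻¹ := by
    obtain ⟨z, hz⟩ := IsAlgClosed.exists_pow_nat_eq ((ζ x)⁻¹ : ℂˣ).val (Nat.pos_of_ne_zero hm)
    have hz0 : z ≠ 0 := by rintro rfl; simp [zero_pow hm] at hz; exact (ζ x).ne_zero hz.symm
    exact ⟨Units.mk0 z hz0, Units.ext (by simpa using hz)⟩
  choose ε hε using hroot
  refine ⟨ε, fun x y => ?_⟩
  have hαm : (α : K → K → ℂˣ) x y ^ m = ζ x * ζ y * (ζ (x * y))⁻¹ := hζ x y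
  rw [mem_rootsOfUnity, mul_pow, mul_pow, mul_pow, inv_pow, hαm, hε, hε, hε, inv_inv]
  ext
  push_cast
  field_simp

namespace ProjRep

variable (ρ : ProjRep K W)

theorem coclass_res (H : Subgroup K) : (ρ.res H).coclass = H2Res H ρ.coclass := rfl

theorem φ_one_apply (v : W) : ρ.φ 1 v = ((ρ.α : K → K → ℂˣ) 1 1 : ℂ) • v := by
  simpa using ρ.rel 1 1 ((ρ.φ 1).symm v)

variable (m : ℕ) (ε : K → ℂˣ)
  (hε : ∀ x y, (ρ.α : K → K → ℂˣ) x y * ε x * ε y * (ε (x * y))⁻¹ ∈ rootsOfUnity m ℂ)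

include hε in
theorem cocycle_one_one_mul_mem_rootsOfUnity :
    (ρ.α : K → K → ℂˣ) 1 1 * ε 1 ∈ rootsOfUnity m ℂ := by
  simpa using hε 1 1

/-- The pairs `((u * ε x) • ρ.φ x, x)` with `u` an `m`-th root of unity. Since `ε` rescales the
cocycle of `ρ` into `m`-th roots of unity, they are closed under multiplication. -/
def liftSubmonoid : Submonoid ((W ≃ₗ[ℂ] W) × K) where
  carrier := {p | ∃ u ∈ rootsOfUnity m ℂ, ∀ v, p.1 v = ((u * ε p.2 : ℂˣ) : ℂ) • ρ.φ p.2 v}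
  one_mem' := by
    refine ⟨((ρ.α : K → K → ℂˣ) 1 1 * ε 1)⁻¹,
      inv_mem (cocycle_one_one_mul_mem_rootsOfUnity ρ m ε hε), fun v => ?_⟩
    rw [Prod.fst_one, Prod.snd_one, ρ.φ_one_apply, smul_smul]
    push_cast
    field_simp
    rw [one_smul]
    rfl
  mul_mem' := by
    rintro ⟨g, x⟩ ⟨h, y⟩ ⟨u, hu, hg⟩ ⟨u', hu', hh⟩
    refine ⟨u * u' * ((ρ.α : K → K → ℂˣ) x y * ε x * ε y * (ε (x * y))⁻¹),
      mul_mem (mul_mem hu hu') (hε x y), fun v => ?_⟩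
    simp only [Prod.mk_mul_mk, LinearEquiv.mul_apply, hg, hh, map_smul, ρ.rel, smul_smul]
    congr 1
    push_cast
    field_simp

theorem pow_natCard_mul_eq_one [Finite K] {p : (W ≃ₗ[ℂ] W) × K}
    (hp : p ∈ liftSubmonoid ρ m ε hε) : p ^ (Nat.card K * m) = 1 := by
  obtain ⟨u, hu, hq⟩ := pow_mem hp (Nat.card K)
  have hq2 : (p ^ Nat.card K).2 = 1 := by rw [Prod.pow_snd, pow_card_eq_one']
  set c : ℂˣ := u * ((ρ.α : K → K → ℂˣ) 1 1 * ε 1)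
  have hc : c ^ m = 1 :=
    (mem_rootsOfUnity _ _).1 (mul_mem hu (cocycle_one_one_mul_mem_rootsOfUnity ρ m ε hε))
  have hq1 : ⇑(p ^ Nat.card K).1 = fun v => (c : ℂ) • v := funext fun v => by
    rw [hq, hq2, φ_one_apply, smul_smul]
    simp only [c, Units.val_mul]
    ring_nf
  rw [pow_mul]
  refine Prod.ext (LinearEquiv.ext fun v => ?_) (by rw [Prod.pow_snd, hq2, one_pow]; rfl)
  rw [Prod.pow_fst, LinearEquiv.pow_apply, hq1, smul_iterate, ← Units.val_pow_eq_pow_val, hc,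
    Units.val_one]
  exact one_smul ℂ v

def liftGroup [Finite K] [NeZero m] : Subgroup ((W ≃ₗ[ℂ] W) × K) where
  toSubmonoid := liftSubmonoid ρ m ε hε
  inv_mem' {p} hp := by
    have hN : Nat.card K * m ≠ 0 := mul_ne_zero Nat.card_pos.ne' (NeZero.ne m)
    rw [inv_eq_of_mul_eq_one_right
      ((mul_pow_sub_one hN p).trans (pow_natCard_mul_eq_one ρ m ε hε hp))]
    exact (liftSubmonoid ρ m ε hε).pow_mem hp _

variable [Finite K] [NeZero m]

instance : Finite (liftGroup ρ m ε hε) := by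
  choose u hu hp using fun p : liftGroup ρ m ε hε => p.2
  refine Finite.of_injective
    (fun p => ((⟨u p, hu p⟩ : rootsOfUnity m ℂ), (p : (W ≃ₗ[ℂ] W) × K).2)) fun p q hpq => ?_
  simp only [Prod.mk.injEq, Subtype.mk.injEq] at hpq
  exact Subtype.ext (Prod.ext (LinearEquiv.ext fun v => by rw [hp, hp, hpq.1, hpq.2]) hpq.2)

def liftRepresentation : Representation ℂ (liftGroup ρ m ε hε) W :=
  LinearEquiv.automorphismGroup.toLinearMapMonoidHom.comp
    ((MonoidHom.fst _ _).comp (liftGroup ρ m ε hε).subtype)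

theorem isIrreducible_liftRepresentation (hρ : ρ.Irreducible) :
    (liftRepresentation ρ m ε hε).IsIrreducible := by
  obtain ⟨hW, hinv⟩ := hρ
  have hmem (x : K) : ((ρ.φ x).trans (LinearEquiv.smulOfUnit (ε x)), x) ∈ liftGroup ρ m ε hε :=
    ⟨1, one_mem _, fun v => by simp [LinearEquiv.smulOfUnit, Units.smul_def]⟩
  refine { exists_pair_ne := ⟨⊥, ⊤, fun h => bot_ne_top congr(($h).toSubmodule)⟩,
           eq_bot_or_eq_top := fun σ => ?_ }
  refine (hinv σ.toSubmodule fun x v hv => ?_).imp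
    (fun h => Subrepresentation.toSubmodule_injective h)
    (fun h => Subrepresentation.toSubmodule_injective h)
  have := σ.toSubmodule.smul_mem ((ε x)⁻¹ : ℂ) (σ.apply_mem_toSubmodule ⟨_, hmem x⟩ hv)
  simpa [liftRepresentation, LinearEquiv.smulOfUnit, Units.smul_def] using this

theorem Irreducible.isPiNumber_finrank [FiniteDimensional ℂ W] {ρ : ProjRep K W}
    (hρ : ρ.Irreducible) {π : Set ℕ} (hK : IsPiNumber π (Nat.card K))
    (hc : IsPiNumber π (orderOf ρ.coclass)) : IsPiNumber π (finrank ℂ W) := by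
  set m := orderOf ρ.coclass
  have hm : m ≠ 0 :=
    (isOfFinOrder_iff_pow_eq_one.2 ⟨_, Nat.card_pos, mkClass_pow_natCard ρ.α⟩).orderOf_pos.ne'
  have := NeZero.mk hm
  obtain ⟨ε, hε⟩ := exists_mul_mem_rootsOfUnity ρ.α hm (pow_orderOf_eq_one _)
  have := Fintype.ofFinite (liftGroup ρ m ε hε)
  have := isIrreducible_liftRepresentation ρ m ε hε hρ
  refine (isPiNumber_card_of_forall_pow_eq_one (hK.mul hc) fun p => ?_).of_dvd
    (liftRepresentation ρ m ε hε).finrank_dvd_card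
  exact Subtype.ext (pow_natCard_mul_eq_one ρ m ε hε p.2)

end ProjRep


theorem piPart_mul (π : Set ℕ) {a b : ℕ} (ha : a ≠ 0) (hb : b ≠ 0) :
    piPart π (a * b) = piPart π a * piPart π b := by
  unfold piPart
  rw [Nat.factorization_mul ha hb]
  exact Finsupp.prod_add_index' (fun p => by simp) fun p k l => by
    by_cases h : p ∈ π <;> simp [h, pow_add]

theorem piPart_eq_self {π : Set ℕ} {n : ℕ} (hn : n ≠ 0) (h : IsPiNumber π n) :
    piPart π n = n := by
  conv_rhs => rw [← Nat.prod_factorization_pow_eq_self hn]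
  refine Finsupp.prod_congr fun p hp => ?_
  rw [Nat.support_factorization] at hp
  rw [if_pos (h p (Nat.prime_of_mem_primeFactors hp) (Nat.dvd_of_mem_primeFactors hp))]

theorem piPart_eq_one {π : Set ℕ} {n : ℕ} (h : IsPiNumber πᶜ n) : piPart π n = 1 := by
  unfold piPart Finsupp.prod
  refine Finset.prod_eq_one fun p hp => ?_
  rw [Nat.support_factorization] at hp
  exact if_neg (h p (Nat.prime_of_mem_primeFactors hp) (Nat.dvd_of_mem_primeFactors hp))

theorem piPart_mul_mul_of_isPiNumber {π : Set ℕ} {i d d' : ℕ} (hi : i ≠ 0) (hd0 : d ≠ 0)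
    (hd'0 : d' ≠ 0) (hd : IsPiNumber π d) (hd' : IsPiNumber πᶜ d') :
    piPart π (i * (d * d')) = piPart π i * d := by
  rw [piPart_mul π hi (mul_ne_zero hd0 hd'0), piPart_mul π hd0 hd'0, piPart_eq_self hd0 hd,
    piPart_eq_one hd', mul_one]

theorem card_eq_index_of_existsUnique_inv_mul_mem {G : Type*} [Group G] {J : Subgroup G}
    {T : Finset G} (hT : ∀ g : G, ∃! t, t ∈ T ∧ t⁻¹ * g ∈ J) : T.card = J.index := by
  have : Subgroup.IsComplement (T : Set G) J :=
    Subgroup.isComplement_iff_existsUnique_inv_mul_mem.2 fun g => by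
      obtain ⟨t, ⟨ht, htg⟩, huniq⟩ := hT g
      exact ⟨⟨t, ht⟩, htg, fun s hs => Subtype.ext (huniq s ⟨s.2, hs⟩)⟩
  rw [← Set.ncard_coe_finset, this.ncard_left]

theorem statement_15_general {G : Type} [Group G] [Fintype G] (π : Set ℕ)
    (cπ cπ' : SchurMultiplier G) (hoπ : IsPiNumber π (orderOf cπ))
    (hoπ' : IsPiNumber πᶜ (orderOf cπ'))
    (M : Type) [AddCommGroup M] [Module ℂ M] (V : ProjRep G M) (J : Subgroup G)
    (Mπ : Type) [AddCommGroup Mπ] [Module ℂ Mπ] [FiniteDimensional ℂ Mπ]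
    (Mπ' : Type) [AddCommGroup Mπ'] [Module ℂ Mπ'] [FiniteDimensional ℂ Mπ']
    (Vπ : ProjRep ↥J Mπ) (Vπ' : ProjRep ↥J Mπ')
    (hVπc : Vπ.coclass = H2Res J cπ) (hVπ'c : Vπ'.coclass = H2Res J cπ')
    (hInd : V.IsInducedFrom J (Vπ.tprod Vπ'))
    (H : Subgroup ↥J) (hHall : IsHall π H) (hHirr : (Vπ.res H).Irreducible)
    (H' : Subgroup ↥J) (hHall' : IsHall πᶜ H') (hH'irr : (Vπ'.res H').Irreducible) :
    piPart π (Module.finrank ℂ M) = piPart π J.index * Module.finrank ℂ Mπ ∧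
    piPart πᶜ (Module.finrank ℂ M) = piPart πᶜ J.index * Module.finrank ℂ Mπ' := by
  obtain ⟨-, -, -, -, -, T, hT, -, hdim⟩ := hInd
  have hdπ : IsPiNumber π (finrank ℂ Mπ) := hHirr.isPiNumber_finrank hHall.1 <| by
    rw [ProjRep.coclass_res, hVπc]
    exact hoπ.of_dvd ((orderOf_map_dvd _ _).trans (orderOf_map_dvd _ _))
  have hdπ' : IsPiNumber πᶜ (finrank ℂ Mπ') := hH'irr.isPiNumber_finrank hHall'.1 <| by
    rw [ProjRep.coclass_res, hVπ'c]
    exact hoπ'.of_dvd ((orderOf_map_dvd _ _).trans (orderOf_map_dvd _ _))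
  have : Nontrivial Mπ := hHirr.1
  have : Nontrivial Mπ' := hH'irr.1
  have hJ : J.index ≠ 0 := Subgroup.index_ne_zero_of_finite
  rw [hdim, card_eq_index_of_existsUnique_inv_mul_mem hT, finrank_tensorProduct]
  refine ⟨piPart_mul_mul_of_isPiNumber hJ finrank_pos.ne' finrank_pos.ne' hdπ hdπ', ?_⟩
  rw [mul_comm (finrank ℂ Mπ)]
  exact piPart_mul_mul_of_isPiNumber hJ finrank_pos.ne' finrank_pos.ne' hdπ' (by rwa [compl_compl])

/-- **Degrees in the `π`-decomposition.** Let `G` be a finite `π`-separable group,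
`c = [a] = c_π c_π'`, and `V` an irreducible `c`-module with a decomposition
`V = Ind_J^{cG}(V_π ⊗ V_π')`, where `V_π` is an irreducible `c_π|_J`-module whose restriction
to a Hall `π`-subgroup of `J` is irreducible and `V_π'` is an irreducible `c_π'|_J`-module
whose restriction to a Hall `π'`-subgroup of `J` is irreducible. Then
`(dim V)_π = |G:J|_π · dim V_π` and `(dim V)_π' = |G:J|_π' · dim V_π'`. -/
theorem statement_15 {G : Type} [Group G] [Fintype G] (π : Set ℕ)
    (hπ : ∀ p ∈ π, Nat.Prime p) (hsep : IsPiSeparable π G)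
    (a : CocycleGroup G) (cπ cπ' : SchurMultiplier G)
    (hdec : mkClass a = cπ * cπ') (hoπ : IsPiNumber π (orderOf cπ))
    (hoπ' : IsPiNumber πᶜ (orderOf cπ'))
    (M : Type) [AddCommGroup M] [Module ℂ M] [FiniteDimensional ℂ M]
    (V : ProjRep G M) (hirr : V.Irreducible) (hcl : V.coclass = mkClass a)
    (J : Subgroup G)
    (Mπ : Type) [AddCommGroup Mπ] [Module ℂ Mπ] [FiniteDimensional ℂ Mπ]
    (Mπ' : Type) [AddCommGroup Mπ'] [Module ℂ Mπ'] [FiniteDimensional ℂ Mπ']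
    (Vπ : ProjRep ↥J Mπ) (Vπ' : ProjRep ↥J Mπ')
    (hVπirr : Vπ.Irreducible) (hVπ'irr : Vπ'.Irreducible)
    (hVπc : Vπ.coclass = H2Res J cπ) (hVπ'c : Vπ'.coclass = H2Res J cπ')
    (hInd : V.IsInducedFrom J (Vπ.tprod Vπ'))
    (H : Subgroup ↥J) (hHall : IsHall π H) (hHirr : (Vπ.res H).Irreducible)
    (H' : Subgroup ↥J) (hHall' : IsHall πᶜ H') (hH'irr : (Vπ'.res H').Irreducible) :
    piPart π (Module.finrank ℂ M) = piPart π J.index * Module.finrank ℂ Mπ ∧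
    piPart πᶜ (Module.finrank ℂ M) = piPart πᶜ J.index * Module.finrank ℂ Mπ' :=
  statement_15_general π cπ cπ' hoπ hoπ' M V J Mπ Mπ' Vπ Vπ' hVπc hVπ'c hInd H hHall hHirr H' hHall'
    hH'irr

end ProjIM
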